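/- arXiv:0705.1894 — 2 statements merged into one kernel-verified Lean document; each statement's English description precedes it below -/
import Mathlib

section
/- Let (Z,r) be a strong twisted union of symmetric sets (X,r_X) and (Y,r_Y), and suppose (Z,r) is itself a symmetric set satisfying lri. Then the retraction ([Z], r_{[Z]}) is a strong twisted union of the retractions ([X], r_{[X]}) and ([Y], r_{[Y]}); in particular the stu identities λ_{ρ_{[y]}([α])}([x]) = λ_{[α]}([x]) hold in [Z] for all x,y ∈ X, α ∈ Y. -/
/-- The quadratic map `r(x,y) = (λ_x(y), ρ_y(x))`. -/
def ybMap {X : Type*} (lam rho : X → X → X) : X × X → X × X :=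
  fun p => (lam p.1 p.2, rho p.2 p.1)

/-- `r¹² = r × id` on `X × X × X`. -/
def ybR12 {X : Type*} (lam rho : X → X → X) : X × X × X → X × X × X :=
  fun p => (lam p.1 p.2.1, rho p.2.1 p.1, p.2.2)

/-- `r²³ = id × r` on `X × X × X`. -/
def ybR23 {X : Type*} (lam rho : X → X → X) : X × X × X → X × X × X :=
  fun p => (p.1, lam p.2.1 p.2.2, rho p.2.2 p.2.1)

/-- The braid (Yang–Baxter) relation `r¹²r²³r¹² = r²³r¹²r²³`. -/
def YbBraided {X : Type*} (lam rho : X → X → X) : Prop :=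
  ybR12 lam rho ∘ ybR23 lam rho ∘ ybR12 lam rho
    = ybR23 lam rho ∘ ybR12 lam rho ∘ ybR23 lam rho

/-- `r` is involutive: `r ∘ r = id`. -/
def YbInvolutive {X : Type*} (lam rho : X → X → X) : Prop :=
  ∀ p, ybMap lam rho (ybMap lam rho p) = p

/-- Nondegeneracy: all `λ_x` and `ρ_x` are bijective. -/
def YbNondeg {X : Type*} (lam rho : X → X → X) : Prop :=
  (∀ x, Function.Bijective (lam x)) ∧ (∀ x, Function.Bijective (rho x))

/-- Condition lri: `ρ_x(λ_x(y)) = y = λ_x(ρ_x(y))`. -/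
def YbLri {X : Type*} (lam rho : X → X → X) : Prop :=
  ∀ x y, rho x (lam x y) = y ∧ lam x (rho x y) = y

/-- Square-free: `r(x,x) = (x,x)`. -/
def YbSquareFree {X : Type*} (lam rho : X → X → X) : Prop :=
  ∀ x, lam x x = x ∧ rho x x = x

/-- The retraction equivalence: `x ∼ y` iff `λ_x = λ_y`. -/
def lamSetoid {X : Type*} (lam : X → X → X) : Setoid X where
  r x y := lam x = lam y
  iseqv := ⟨fun _ => rfl, Eq.symm, Eq.trans⟩

/-!
Under lri, `ρ_b = λ_b⁻¹`, so `ρ_b` depends only on the class of `b`. The first component of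
the braid relation, `λ_{λ_a(b)} λ_{ρ_b(a)} = λ_a λ_b`, then shows that the classes of `λ_a(b)`
and `ρ_b(a)` depend only on the classes of `a` and `b`. Hence `r` descends to `[Z]`, and the
stu identities of `Z` are mapped to those of `[Z]` by the quotient map.
-/

section Retraction

variable {Z : Type*} {lam rho : Z → Z → Z}

theorem YbLri.rho_eq_of_lam_eq (hlri : YbLri lam rho) {b b' : Z} (h : lam b = lam b') :
    rho b = rho b' := by
  funext x
  calc rho b x = rho b (lam b' (rho b' x)) := by rw [(hlri b' x).2]
    _ = rho b (lam b (rho b' x)) := by rw [h]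
    _ = rho b' x := (hlri b _).1

theorem YbBraided.lam_lam_lam_rho (hbr : YbBraided lam rho) (x y z : Z) :
    lam (lam x y) (lam (rho y x) z) = lam x (lam y z) :=
  congrArg Prod.fst (congrFun hbr (x, y, z))

theorem YbBraided.lam_lam_eq (hbr : YbBraided lam rho) (hlri : YbLri lam rho) (a x : Z) :
    lam (lam a x) = fun w => lam a (lam x (rho (rho x a) w)) := by
  funext w
  rw [← hbr.lam_lam_lam_rho, (hlri _ w).2]

theorem YbBraided.lam_rho_eq (hbr : YbBraided lam rho) (hlri : YbLri lam rho) (a x : Z) :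
    lam (rho x a) = fun z => rho (lam a x) (lam a (lam x z)) := by
  funext z
  rw [← hbr.lam_lam_lam_rho, (hlri _ _).1]

theorem YbBraided.lam_lam_congr (hbr : YbBraided lam rho) (hlri : YbLri lam rho)
    {a a' b b' : Z} (ha : lam a = lam a') (hb : lam b = lam b') :
    lam (lam a b) = lam (lam a' b') := by
  rw [congrFun ha b, hbr.lam_lam_eq hlri, hbr.lam_lam_eq hlri, hb, hlri.rho_eq_of_lam_eq hb]

theorem YbBraided.lam_rho_congr (hbr : YbBraided lam rho) (hlri : YbLri lam rho)
    {a a' b b' : Z} (hb : lam b = lam b') (ha : lam a = lam a') :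
    lam (rho b a) = lam (rho b' a') := by
  rw [hlri.rho_eq_of_lam_eq hb, hbr.lam_rho_eq hlri, hbr.lam_rho_eq hlri, ha]

def retractLam (hbr : YbBraided lam rho) (hlri : YbLri lam rho) :
    Quotient (lamSetoid lam) → Quotient (lamSetoid lam) → Quotient (lamSetoid lam) :=
  Quotient.lift₂ (fun a b => Quotient.mk (lamSetoid lam) (lam a b))
    fun _ _ _ _ ha hb => Quotient.sound (hbr.lam_lam_congr hlri ha hb)

def retractRho (hbr : YbBraided lam rho) (hlri : YbLri lam rho) :
    Quotient (lamSetoid lam) → Quotient (lamSetoid lam) → Quotient (lamSetoid lam) :=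
  Quotient.lift₂ (fun b a => Quotient.mk (lamSetoid lam) (rho b a))
    fun _ _ _ _ hb ha => Quotient.sound (hbr.lam_rho_congr hlri hb ha)

end Retraction

theorem retraction_of_stu_is_stu_general {Z : Type*} (lam rho : Z → Z → Z) (X Y : Set Z)
    (hbr : YbBraided lam rho) (hlri : YbLri lam rho)
    (hstu1 : ∀ x ∈ X, ∀ y ∈ X, ∀ α ∈ Y, lam (rho y α) x = lam α x)
    (hstu2 : ∀ α ∈ Y, ∀ β ∈ Y, ∀ x ∈ X, rho (lam β x) α = rho x α) :
    ∃ lamQ rhoQ : Quotient (lamSetoid lam) → Quotient (lamSetoid lam) → Quotient (lamSetoid lam),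
      (∀ a b : Z, lamQ (Quotient.mk (lamSetoid lam) a) (Quotient.mk (lamSetoid lam) b)
          = Quotient.mk (lamSetoid lam) (lam a b)) ∧
      (∀ a b : Z, rhoQ (Quotient.mk (lamSetoid lam) b) (Quotient.mk (lamSetoid lam) a)
          = Quotient.mk (lamSetoid lam) (rho b a)) ∧
      (∀ x ∈ X, ∀ y ∈ X, ∀ α ∈ Y,
        lamQ (rhoQ (Quotient.mk (lamSetoid lam) y) (Quotient.mk (lamSetoid lam) α))
            (Quotient.mk (lamSetoid lam) x)
          = lamQ (Quotient.mk (lamSetoid lam) α) (Quotient.mk (lamSetoid lam) x)) ∧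
      (∀ α ∈ Y, ∀ β ∈ Y, ∀ x ∈ X,
        rhoQ (lamQ (Quotient.mk (lamSetoid lam) β) (Quotient.mk (lamSetoid lam) x))
            (Quotient.mk (lamSetoid lam) α)
          = rhoQ (Quotient.mk (lamSetoid lam) x) (Quotient.mk (lamSetoid lam) α)) :=
  ⟨retractLam hbr hlri, retractRho hbr hlri, fun _ _ => rfl, fun _ _ => rfl,
    fun x hx y hy α hα => congrArg (Quotient.mk _) (hstu1 x hx y hy α hα),
    fun α hα β hβ x hx => congrArg (Quotient.mk _) (hstu2 α hα β hβ x hx)⟩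

/-- if `(Z,r)` is a strong twisted union of symmetric sets on `X` and `Y`
and is itself a symmetric set with lri, then the retraction `[Z]` is a strong twisted
union of `[X]` and `[Y]`: the induced quotient actions satisfy the stu identities. -/
theorem retraction_of_stu_is_stu {Z : Type*} (lam rho : Z → Z → Z) (X Y : Set Z)
    (hdisj : Disjoint X Y) (hcover : X ∪ Y = Set.univ)
    (hXinv : ∀ x ∈ X, ∀ y ∈ X, lam x y ∈ X ∧ rho y x ∈ X)
    (hYinv : ∀ α ∈ Y, ∀ β ∈ Y, lam α β ∈ Y ∧ rho β α ∈ Y)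
    (hnd : YbNondeg lam rho) (hinv : YbInvolutive lam rho)
    (hbr : YbBraided lam rho) (hlri : YbLri lam rho)
    (hstu1 : ∀ x ∈ X, ∀ y ∈ X, ∀ α ∈ Y, lam (rho y α) x = lam α x)
    (hstu2 : ∀ α ∈ Y, ∀ β ∈ Y, ∀ x ∈ X, rho (lam β x) α = rho x α) :
    ∃ lamQ rhoQ : Quotient (lamSetoid lam) → Quotient (lamSetoid lam) → Quotient (lamSetoid lam),
      (∀ a b : Z, lamQ (Quotient.mk (lamSetoid lam) a) (Quotient.mk (lamSetoid lam) b)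
          = Quotient.mk (lamSetoid lam) (lam a b)) ∧
      (∀ a b : Z, rhoQ (Quotient.mk (lamSetoid lam) b) (Quotient.mk (lamSetoid lam) a)
          = Quotient.mk (lamSetoid lam) (rho b a)) ∧
      (∀ x ∈ X, ∀ y ∈ X, ∀ α ∈ Y,
        lamQ (rhoQ (Quotient.mk (lamSetoid lam) y) (Quotient.mk (lamSetoid lam) α))
            (Quotient.mk (lamSetoid lam) x)
          = lamQ (Quotient.mk (lamSetoid lam) α) (Quotient.mk (lamSetoid lam) x)) ∧
      (∀ α ∈ Y, ∀ β ∈ Y, ∀ x ∈ X,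
        rhoQ (lamQ (Quotient.mk (lamSetoid lam) β) (Quotient.mk (lamSetoid lam) x))
            (Quotient.mk (lamSetoid lam) α)
          = rhoQ (Quotient.mk (lamSetoid lam) x) (Quotient.mk (lamSetoid lam) α)) :=
  retraction_of_stu_is_stu_general lam rho X Y hbr hlri hstu1 hstu2
end

section
/- Let (X,r) be a finite nondegenerate involutive square-free solution, x,a,b ∈ X, with the actions of a and b commuting on the connected component of x (λ_{λ_b(a)} = λ_a and λ_{λ_a(b)} = λ_b there). Then: (1) if λ_a(x) = λ_b(x), the λ_a-orbit and λ_b-orbit of x coincide as cycles (λ_a and λ_b agree on this orbit); (2) if λ_b(λ_a(x)) = x, then λ_b acts on the λ_a-orbit of x as λ_a^{-1}. -/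
/-- Connectedness in the graph `Γ(X,r)`. -/
def ybConn {X : Type*} (lam : X → X → X) : X → X → Prop :=
  Relation.EqvGen (fun u v => ∃ a, lam a u = v)

/-!
The braid relation gives `λ_a λ_b = λ_{λ_a(b)} λ_{ρ_b(a)}` and `λ_b λ_a = λ_{λ_b(a)} λ_{ρ_a(b)}`,
and with the half `λ_y ρ_y = id` of lri, which holds in any such solution, also
`λ_b λ_{ρ_b(a)} = λ_a λ_{ρ_a(b)}`. On the component of `x` the hypothesis replaces `λ_{λ_a(b)}`
by `λ_b` and `λ_{λ_b(a)}` by `λ_a`, so `λ_a` and `λ_b` commute there. Hence `λ_b` commutes with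
every power of `λ_a` on the `λ_a`-orbit of `x`, and both claims reduce to the value of `λ_b`
at `x`, resp. at `λ_a(x)`.
-/

theorem Function.iterate_apply_comm_of_invariant {α : Type*} {p : α → Prop} {f g : α → α}
    (hf : ∀ z, p z → p (f z)) (hfg : ∀ z, p z → g (f z) = f (g z)) :
    ∀ (n : ℕ) {z : α}, p z → g (f^[n] z) = f^[n] (g z)
  | 0, _, _ => rfl
  | n + 1, z, hz => by
    rw [Function.iterate_succ_apply, Function.iterate_succ_apply,
      iterate_apply_comm_of_invariant hf hfg n (hf z hz), hfg z hz]

section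
variable {X : Type*} {lam rho : X → X → X}

theorem YbBraided.lam_lam_eq_s16 (hbr : YbBraided lam rho) (x y z : X) :
    lam x (lam y z) = lam (lam x y) (lam (rho y x) z) := by
  simpa [ybR12, ybR23] using (congrArg Prod.fst (congrFun hbr (x, y, z))).symm

theorem YbInvolutive.lam_lam_rho (hinv : YbInvolutive lam rho) (x y : X) :
    lam (lam x y) (rho y x) = x :=
  congrArg Prod.fst (hinv (x, y))

theorem lam_rho_cancel (hnd : YbNondeg lam rho) (hinv : YbInvolutive lam rho)
    (hsf : YbSquareFree lam rho) (hbr : YbBraided lam rho) (x y : X) :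
    lam y (rho y x) = x := by
  apply (hnd.1 x).1
  calc lam x (lam y (rho y x))
      = lam (lam x y) (lam (rho y x) (rho y x)) := hbr.lam_lam_eq_s16 x y (rho y x)
    _ = x := by rw [(hsf _).1, hinv.lam_lam_rho]
    _ = lam x x := (hsf x).1.symm

theorem rho_rho_cancel (hnd : YbNondeg lam rho) (hinv : YbInvolutive lam rho)
    (hsf : YbSquareFree lam rho) (hbr : YbBraided lam rho) (a b : X) :
    rho (rho b a) b = rho a b := by
  apply (hnd.1 a).1
  have h := hinv.lam_lam_rho b (rho b a)
  rw [lam_rho_cancel hnd hinv hsf hbr] at h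
  rw [h, lam_rho_cancel hnd hinv hsf hbr]

theorem lam_lam_rho_eq (hnd : YbNondeg lam rho) (hinv : YbInvolutive lam rho)
    (hsf : YbSquareFree lam rho) (hbr : YbBraided lam rho) (a b z : X) :
    lam b (lam (rho b a) z) = lam a (lam (rho a b) z) := by
  rw [hbr.lam_lam_eq_s16, lam_rho_cancel hnd hinv hsf hbr, rho_rho_cancel hnd hinv hsf hbr]

theorem ybConn.lam_apply {x z : X} (c : X) (hz : ybConn lam x z) : ybConn lam x (lam c z) :=
  .trans _ _ _ hz (.rel _ _ ⟨c, rfl⟩)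

theorem lam_lam_comm_of_ybConn (hnd : YbNondeg lam rho) (hinv : YbInvolutive lam rho)
    (hsf : YbSquareFree lam rho) (hbr : YbBraided lam rho) {a b x : X}
    (hcomm : ∀ z, ybConn lam x z → lam (lam b a) z = lam a z ∧ lam (lam a b) z = lam b z)
    {z : X} (hz : ybConn lam x z) :
    lam b (lam a z) = lam a (lam b z) :=
  calc lam b (lam a z)
      = lam a (lam (rho a b) z) := by
        rw [hbr.lam_lam_eq_s16, (hcomm _ (hz.lam_apply _)).1]
    _ = lam b (lam (rho b a) z) := (lam_lam_rho_eq hnd hinv hsf hbr a b z).symm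
    _ = lam a (lam b z) := by
        rw [hbr.lam_lam_eq_s16 a, (hcomm _ (hz.lam_apply _)).2]

end

theorem orbit_cycles_corollary_general {X : Type*} (lam rho : X → X → X)
    (hnd : YbNondeg lam rho) (hinv : YbInvolutive lam rho)
    (hsf : YbSquareFree lam rho) (hbr : YbBraided lam rho)
    (a b x : X)
    (hcomm : ∀ z, ybConn lam x z → lam (lam b a) z = lam a z ∧ lam (lam a b) z = lam b z) :
    (lam a x = lam b x → ∀ i, lam b ((lam a)^[i] x) = (lam a)^[i + 1] x) ∧
    (lam b (lam a x) = x → ∀ i, lam b ((lam a)^[i + 1] x) = (lam a)^[i] x) := by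
  have comm_iterate : ∀ i {z}, ybConn lam x z → lam b ((lam a)^[i] z) = (lam a)^[i] (lam b z) :=
    Function.iterate_apply_comm_of_invariant (fun _ hz => hz.lam_apply a)
      (fun _ hz => lam_lam_comm_of_ybConn hnd hinv hsf hbr hcomm hz)
  have hx : ybConn lam x x := .refl x
  refine ⟨fun h i => ?_, fun h i => ?_⟩
  · rw [comm_iterate i hx, ← h, Function.iterate_succ_apply]
  · rw [Function.iterate_succ_apply, comm_iterate i (hx.lam_apply a), h]

/-- let `(X,r)` be a finite nondegenerate involutive square-free solution
and `x, a, b ∈ X` with the actions of `a` and `b` commuting on the component of `x`.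
Then: (1) if `λ_a(x) = λ_b(x)` then `λ_a` and `λ_b` agree on the `λ_a`-orbit of `x`;
(2) if `λ_b(λ_a(x)) = x` then `λ_b` acts on the `λ_a`-orbit of `x` as `λ_a⁻¹`. -/
theorem orbit_cycles_corollary {X : Type*} [Finite X] (lam rho : X → X → X)
    (hnd : YbNondeg lam rho) (hinv : YbInvolutive lam rho)
    (hsf : YbSquareFree lam rho) (hbr : YbBraided lam rho)
    (a b x : X)
    (hcomm : ∀ z, ybConn lam x z → lam (lam b a) z = lam a z ∧ lam (lam a b) z = lam b z) :
    (lam a x = lam b x → ∀ i, lam b ((lam a)^[i] x) = (lam a)^[i + 1] x) ∧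
    (lam b (lam a x) = x → ∀ i, lam b ((lam a)^[i + 1] x) = (lam a)^[i] x) :=
  orbit_cycles_corollary_general lam rho hnd hinv hsf hbr a b x hcomm
end
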